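/- In the image persistence setting, the family 𝔷 consisting of the nonzero columns of F·R^φ together with the vectors F v_j for those indices j with r_j = 0 and j ∉ pivs R^φ is a filtration compatible basis for the filtration φ_•(Z_*(C_•)) (given by t ↦ φ(ker ∂|_{C_t})), and for every z ∈ 𝔷 one has supp_{φ_•(Z_*(C_•))}(z) = supp_{C_•}(F^{-1} z). -/

import Mathlib

/-- The support of an element `m` in a filtration `A` of subspaces:
the set of indices `t` with `m ∈ A t`. -/
def fsupp {F W : Type*} [Field F] [AddCommGroup W] [Module F W] {N : ℕ}
    (A : Fin (N + 1) → Submodule F W) (m : W) : Set (Fin (N + 1)) :=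
  {t | m ∈ A t}

/-- A set `B` is a filtration compatible basis for the filtration `A` if it is a basis
of the final space `A (Fin.last N)` such that `B ∩ A t` is a basis of `A t` for every `t`. -/
def IsCompatBasis {F W : Type*} [Field F] [AddCommGroup W] [Module F W] {N : ℕ}
    (A : Fin (N + 1) → Submodule F W) (B : Set W) : Prop :=
  B ⊆ ↑(A (Fin.last N)) ∧
  LinearIndependent F ((↑) : B → W) ∧
  ∀ t, Submodule.span F (B ∩ ↑(A t)) = A t

/-- The `j`-th column of a matrix. -/
def matCol {F : Type*} [Field F] {n m : ℕ} (X : Matrix (Fin n) (Fin m) F) (j : Fin m) :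
    Fin n → F :=
  fun i => X i j

open Classical in
/-- The pivot of a column vector: the largest index at which it has a nonzero entry
(`⊥` for the zero vector). -/
noncomputable def pivFin {F : Type*} [Field F] {n : ℕ} (v : Fin n → F) : WithBot (Fin n) :=
  (Finset.univ.filter fun i => v i ≠ 0).max

/-- A matrix is reduced if no two nonzero columns have the same pivot. -/
def IsReducedMat {F : Type*} [Field F] {n m : ℕ} (X : Matrix (Fin n) (Fin m) F) : Prop :=
  ∀ j k : Fin m, matCol X j ≠ 0 → matCol X k ≠ 0 →
    pivFin (matCol X j) = pivFin (matCol X k) → j = k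

/-- The set of indices occurring as pivots of nonzero columns of `X`. -/
def pivsSet {F : Type*} [Field F] {n m : ℕ} (X : Matrix (Fin n) (Fin m) F) : Set (Fin n) :=
  {i | ∃ j, matCol X j ≠ 0 ∧ pivFin (matCol X j) = ↑i}

/-- Upper-triangular square matrix. -/
def UpperTri {F : Type*} [Field F] {n : ℕ} (V : Matrix (Fin n) (Fin n) F) : Prop :=
  ∀ i j : Fin n, j < i → V i j = 0

section AuxPiv
variable {F : Type*} [Field F] {n : ℕ}

lemma le_pivFin {v : Fin n → F} {i : Fin n} (h : v i ≠ 0) : (i : WithBot (Fin n)) ≤ pivFin v := by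
  classical
  apply Finset.le_max
  simp [pivFin, h]

lemma eq_zero_of_pivFin_lt {v : Fin n → F} {i : Fin n} (h : pivFin v < ↑i) : v i = 0 := by
  by_contra hi; exact absurd (le_pivFin hi) (not_le.mpr h)

lemma pivFin_eq_bot_iff (v : Fin n → F) : pivFin v = ⊥ ↔ v = 0 := by
  classical
  unfold pivFin
  rw [Finset.max_eq_bot, Finset.filter_eq_empty_iff]
  constructor
  · intro h; funext i; have := h (Finset.mem_univ i); simpa using this
  · intro h i _; simp [h]

lemma pivFin_eq_coe_iff {v : Fin n → F} {p : Fin n} :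
    pivFin v = ↑p ↔ v p ≠ 0 ∧ ∀ k, p < k → v k = 0 := by
  classical
  constructor
  · intro h
    have hmem := Finset.mem_of_max (α := Fin n) (by exact h)
    simp only [Finset.mem_filter, Finset.mem_univ, true_and] at hmem
    exact ⟨hmem, fun k hk => eq_zero_of_pivFin_lt (by rw [h]; exact_mod_cast hk)⟩
  · rintro ⟨h1, h2⟩
    refine le_antisymm ?_ (le_pivFin h1)
    apply Finset.max_le
    intro b hb
    simp only [Finset.mem_filter, Finset.mem_univ, true_and] at hb
    by_contra hle
    exact hb (h2 b (by exact_mod_cast not_le.mp hle))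

lemma pivFin_exists {v : Fin n → F} (h : v ≠ 0) :
    ∃ p : Fin n, pivFin v = ↑p ∧ v p ≠ 0 ∧ ∀ k, p < k → v k = 0 := by
  rcases hp : pivFin v with _ | p
  · exact absurd ((pivFin_eq_bot_iff v).mp hp) h
  · exact ⟨p, rfl, pivFin_eq_coe_iff.mp hp⟩

lemma coeffs_zero {ι : Type*} (s : Finset ι) (c : ι → F) (w : ι → Fin n → F)
    (hne : ∀ i ∈ s, w i ≠ 0)
    (hinj : ∀ i ∈ s, ∀ j ∈ s, pivFin (w i) = pivFin (w j) → i = j)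
    (hsum : ∑ i ∈ s, c i • w i = 0) : ∀ i ∈ s, c i = 0 := by
  classical
  by_contra hc
  push_neg at hc
  obtain ⟨i1, hi1s, hi1⟩ := hc
  have ht : (s.filter fun i => c i ≠ 0).Nonempty := ⟨i1, Finset.mem_filter.mpr ⟨hi1s, hi1⟩⟩
  obtain ⟨i0, hi0t, hmax⟩ := Finset.exists_max_image _ (fun i => pivFin (w i)) ht
  simp only [Finset.mem_filter] at hi0t
  obtain ⟨hi0s, hci0⟩ := hi0t
  obtain ⟨p, hp, hwp, _⟩ := pivFin_exists (hne i0 hi0s)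
  have hev : (∑ i ∈ s, c i • w i) p = 0 := by rw [hsum]; rfl
  rw [Finset.sum_apply] at hev
  have : ∑ i ∈ s, (c i • w i) p = c i0 * w i0 p := by
    apply Finset.sum_eq_single_of_mem i0 hi0s
    intro j hjs hji
    by_cases hcj : c j = 0
    · simp [hcj]
    · have hjt : j ∈ s.filter fun i => c i ≠ 0 := Finset.mem_filter.mpr ⟨hjs, hcj⟩
      have hle := hmax j hjt
      rw [hp] at hle
      have hne' : pivFin (w j) ≠ ↑p := by
        rw [← hp]; intro h; exact hji (hinj j hjs i0 hi0s h)
      have : pivFin (w j) < ↑p := lt_of_le_of_ne hle hne'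
      simp [eq_zero_of_pivFin_lt this]
  rw [this] at hev
  exact (mul_ne_zero hci0 hwp) hev

lemma mulVec_eq_sum_cols {m : ℕ} (M : Matrix (Fin n) (Fin m) F) (a : Fin m → F) :
    M.mulVec a = ∑ j, a j • matCol M j := by
  funext i
  rw [Finset.sum_apply]
  simp [Matrix.mulVec, dotProduct, matCol, mul_comm]

lemma matCol_mul {m k : ℕ} (M : Matrix (Fin n) (Fin m) F) (N : Matrix (Fin m) (Fin k) F)
    (j : Fin k) : matCol (M * N) j = M.mulVec (matCol N j) := by
  funext i
  simp [matCol, Matrix.mul_apply, Matrix.mulVec, dotProduct]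

lemma reduced_kill {m : ℕ} {R : Matrix (Fin n) (Fin m) F} (hred : IsReducedMat R)
    {a : Fin m → F} (h : R.mulVec a = 0) : ∀ j, matCol R j ≠ 0 → a j = 0 := by
  classical
  intro j hj
  have hsum : ∑ i ∈ Finset.univ.filter (fun j => matCol R j ≠ 0), a i • matCol R i = 0 := by
    have heq : ∑ i ∈ Finset.univ.filter (fun j => matCol R j ≠ 0), a i • matCol R i
        = ∑ i, a i • matCol R i := by
      apply Finset.sum_subset (Finset.subset_univ _)
      intro x _ hx
      simp only [Finset.mem_filter, Finset.mem_univ, true_and, not_not] at hx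
      rw [hx, smul_zero]
    rw [heq, ← mulVec_eq_sum_cols, h]
  exact coeffs_zero _ a _ (fun i hi => by simpa using (Finset.mem_filter.mp hi).2)
    (fun i hi k hk hik => hred i k (by simpa using (Finset.mem_filter.mp hi).2)
      (by simpa using (Finset.mem_filter.mp hk).2) hik) hsum j (by simp [hj])

lemma upperTri_diag_ne_zero {V : Matrix (Fin n) (Fin n) F} (hut : UpperTri V)
    (hunit : IsUnit V.det) : ∀ i, V i i ≠ 0 := by
  have hbt : V.BlockTriangular id := fun i j h => hut i j h
  rw [Matrix.det_of_upperTriangular hbt] at hunit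
  intro i
  have := hunit.ne_zero
  intro h
  exact this (Finset.prod_eq_zero (Finset.mem_univ i) h)

lemma pivFin_matCol_upperTri {V : Matrix (Fin n) (Fin n) F} (hut : UpperTri V)
    (hdiag : ∀ i, V i i ≠ 0) (j : Fin n) : pivFin (matCol V j) = ↑j :=
  pivFin_eq_coe_iff.mpr ⟨hdiag j, fun k hk => hut k j hk⟩

lemma pivFin_mulVec_upperTri {V : Matrix (Fin n) (Fin n) F} (hut : UpperTri V)
    (hdiag : ∀ i, V i i ≠ 0) (a : Fin n → F) : pivFin (V.mulVec a) = pivFin a := by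
  classical
  by_cases ha : a = 0
  · subst ha; rw [Matrix.mulVec_zero]
  · obtain ⟨p, hp, hap, hhi⟩ := pivFin_exists ha
    rw [hp]
    apply pivFin_eq_coe_iff.mpr
    constructor
    · have : V.mulVec a p = V p p * a p := by
        unfold Matrix.mulVec dotProduct
        apply Finset.sum_eq_single_of_mem p (Finset.mem_univ p)
        intro j _ hj
        show V p j * a j = 0
        rcases lt_or_gt_of_ne hj with h | h
        · rw [hut p j h, zero_mul]
        · rw [hhi j h, mul_zero]
      rw [this]
      exact mul_ne_zero (hdiag p) hap
    · intro k hk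
      unfold Matrix.mulVec dotProduct
      apply Finset.sum_eq_zero
      intro j _
      show V k j * a j = 0
      rcases lt_or_ge j k with h | h
      · rw [hut k j h, zero_mul]
      · rw [hhi j (lt_of_lt_of_le hk h), mul_zero]

end AuxPiv

section AuxFilt
variable {F : Type*} [Field F] {n N : ℕ}

lemma mem_filt_iff (A : Fin (N + 1) → Submodule F (Fin n → F))
    (hcompat : IsCompatBasis A (Set.range fun j : Fin n => Pi.single j (1 : F)))
    (t : Fin (N + 1)) (w : Fin n → F) :
    w ∈ A t ↔ ∀ k, w k ≠ 0 → Pi.single k (1 : F) ∈ A t := by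
  constructor
  · intro hw
    have hspan := hcompat.2.2 t
    let T : Submodule F (Fin n → F) :=
      { carrier := {u | ∀ k, u k ≠ 0 → Pi.single k (1 : F) ∈ A t}
        zero_mem' := by intro k hk; simp at hk
        add_mem' := by
          intro a b ha hb k hk
          by_cases ha' : a k = 0
          · exact hb k (by simpa [ha'] using hk)
          · exact ha k ha'
        smul_mem' := by
          intro c u hu k hk
          exact hu k (by intro h; exact hk (by simp [h])) }
    have hsub : (Set.range fun j : Fin n => Pi.single j (1 : F)) ∩ ↑(A t) ⊆ ↑T := by
      rintro v ⟨⟨j, rfl⟩, hv⟩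
      intro k hk
      have : k = j := by
        by_contra hkj
        exact hk (Pi.single_eq_of_ne hkj 1)
      subst this; exact hv
    have : A t ≤ T := by rw [← hspan]; exact Submodule.span_le.mpr hsub
    exact this hw
  · intro h
    have hw : w = ∑ k, w k • (Pi.single k (1 : F) : Fin n → F) := by
      funext i
      rw [Finset.sum_apply]
      rw [Finset.sum_eq_single_of_mem i (Finset.mem_univ i)]
      · simp
      · intro j _ hj; simp [Pi.single_eq_of_ne (Ne.symm hj)]
    rw [hw]
    apply Submodule.sum_mem
    intro k _
    by_cases hk : w k = 0
    · rw [hk, zero_smul]; exact Submodule.zero_mem _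
    · exact Submodule.smul_mem _ _ (h k hk)

lemma mem_filt_iff_piv (A : Fin (N + 1) → Submodule F (Fin n → F))
    (hcompat : IsCompatBasis A (Set.range fun j : Fin n => Pi.single j (1 : F)))
    (hord : ∀ j k : Fin n, j ≤ k →
      fsupp A (Pi.single k (1 : F)) ⊆ fsupp A (Pi.single j (1 : F)))
    (t : Fin (N + 1)) {w : Fin n → F} {p : Fin n} (hp : pivFin w = ↑p) :
    w ∈ A t ↔ Pi.single p (1 : F) ∈ A t := by
  obtain ⟨hwp, hhi⟩ := pivFin_eq_coe_iff.mp hp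
  constructor
  · intro hw
    exact (mem_filt_iff A hcompat t w).mp hw p hwp
  · intro hpmem
    apply (mem_filt_iff A hcompat t w).mpr
    intro k hk
    have hkp : k ≤ p := by
      by_contra hc
      exact hk (hhi k (not_le.mp hc))
    exact hord k p hkp hpmem

lemma linearIndependent_of_pivots (S : Set (Fin n → F)) (h0 : (0 : Fin n → F) ∉ S)
    (hinj : ∀ v ∈ S, ∀ w ∈ S, pivFin v = pivFin w → v = w) :
    LinearIndependent F ((↑) : S → (Fin n → F)) := by
  rw [linearIndependent_iff']
  intro s g hsum i hi
  exact coeffs_zero s g (fun x : S => (x : Fin n → F))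
    (fun j _ => fun h => h0 (h ▸ j.2))
    (fun j _ k _ h => Subtype.ext (hinj j j.2 k k.2 h)) hsum i hi

end AuxFilt

section AuxMap
variable {F : Type*} [Field F] {n : ℕ} {Fm : Matrix (Fin n) (Fin n) F}

lemma inv_mulVec_mulVec (hFm : IsUnit Fm.det) (x : Fin n → F) :
    Fm⁻¹.mulVec (Fm.mulVec x) = x := by
  rw [Matrix.mulVec_mulVec, Matrix.nonsing_inv_mul _ hFm, Matrix.one_mulVec]

lemma mulVec_inv_mulVec (hFm : IsUnit Fm.det) (x : Fin n → F) :
    Fm.mulVec (Fm⁻¹.mulVec x) = x := by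
  rw [Matrix.mulVec_mulVec, Matrix.mul_nonsing_inv _ hFm, Matrix.one_mulVec]

lemma mulVec_inj (hFm : IsUnit Fm.det) : Function.Injective Fm.mulVec := by
  intro x y h
  have := congrArg (Fm⁻¹.mulVec) h
  rwa [inv_mulVec_mulVec hFm, inv_mulVec_mulVec hFm] at this

lemma mulVec_ne_zero_iff (hFm : IsUnit Fm.det) (x : Fin n → F) :
    Fm.mulVec x ≠ 0 ↔ x ≠ 0 := by
  constructor
  · intro h hx; exact h (by rw [hx, Matrix.mulVec_zero])
  · intro hx h
    exact hx (mulVec_inj hFm (by rw [h, Matrix.mulVec_zero]))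

lemma mem_map_iff (hFm : IsUnit Fm.det) (P : Submodule F (Fin n → F)) (z : Fin n → F) :
    z ∈ P.map Fm.mulVecLin ↔ Fm⁻¹.mulVec z ∈ P := by
  constructor
  · rintro ⟨x, hx, rfl⟩
    rw [Matrix.mulVecLin_apply, inv_mulVec_mulVec hFm]
    exact hx
  · intro h
    exact ⟨Fm⁻¹.mulVec z, h, by rw [Matrix.mulVecLin_apply, mulVec_inv_mulVec hFm]⟩

lemma image_inter_map (hFm : IsUnit Fm.det) (S : Set (Fin n → F))
    (P : Submodule F (Fin n → F)) :
    (Fm.mulVec '' S) ∩ ↑(P.map Fm.mulVecLin) = Fm.mulVec '' (S ∩ ↑P) := by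
  ext z
  constructor
  · rintro ⟨⟨b, hb, rfl⟩, hz⟩
    have hb' : b ∈ P := by
      have := (mem_map_iff hFm P _).mp hz
      rwa [inv_mulVec_mulVec hFm] at this
    exact ⟨b, ⟨hb, hb'⟩, rfl⟩
  · rintro ⟨b, ⟨hb1, hb2⟩, rfl⟩
    exact ⟨⟨b, hb1, rfl⟩, ⟨b, hb2, by rw [Matrix.mulVecLin_apply]⟩⟩

lemma span_image_mulVec (S : Set (Fin n → F)) :
    Submodule.span F (Fm.mulVec '' S) = (Submodule.span F S).map Fm.mulVecLin := by
  rw [← Submodule.span_image]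
  congr 1

end AuxMap

/- Statement 10: the family 𝔷 consisting of the nonzero columns of F·R^φ together with
the vectors F·v_j for those j with r_j = 0 and j ∉ pivs R^φ is a filtration compatible
basis for φ_•(Z_*(C_•)) : t ↦ φ(ker ∂|_{C_t}), and supp(z) = supp_{C_•}(F⁻¹ z) on 𝔷. -/
theorem stmt_10 {F : Type*} [Field F] {n N : ℕ}
    -- filtrations of the chain complexes C and C', expressed in the coordinates of the
    -- filtration compatible ordered bases 𝔠 and 𝔠' (the standard bases)
    (A A' : Fin (N + 1) → Submodule F (Fin n → F))
    (hmono : Monotone A) (htop : A (Fin.last N) = ⊤)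
    (hmono' : Monotone A') (htop' : A' (Fin.last N) = ⊤)
    (hcompat : IsCompatBasis A (Set.range fun j : Fin n => Pi.single j (1 : F)))
    (hord : ∀ j k : Fin n, j ≤ k →
      fsupp A (Pi.single k (1 : F)) ⊆ fsupp A (Pi.single j (1 : F)))
    (hcompat' : IsCompatBasis A' (Set.range fun j : Fin n => Pi.single j (1 : F)))
    (hord' : ∀ j k : Fin n, j ≤ k →
      fsupp A' (Pi.single k (1 : F)) ⊆ fsupp A' (Pi.single j (1 : F)))
    -- graded chain complex structures, with filtration boundary matrices D and D'
    (deg deg' : Fin n → ℕ) (D D' : Matrix (Fin n) (Fin n) F)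
    (hdeg : ∀ i j : Fin n, D i j ≠ 0 → deg j = deg i + 1)
    (hdeg' : ∀ i j : Fin n, D' i j ≠ 0 → deg' j = deg' i + 1)
    (hD2 : D * D = 0) (hD'2 : D' * D' = 0)
    (hsubcx : ∀ t, (A t).map D.mulVecLin ≤ A t)
    (hsubcx' : ∀ t, (A' t).map D'.mulVecLin ≤ A' t)
    -- the monomorphism φ of filtrations of chain complexes, an isomorphism on the
    -- final filtration step, represented by the invertible matrix Fm
    (Fm : Matrix (Fin n) (Fin n) F) (hFm : IsUnit Fm.det)
    (hphifilt : ∀ t, (A t).map Fm.mulVecLin ≤ A' t)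
    (hphiD : Fm * D = D' * Fm)
    -- the mixed-basis boundary matrix D^φ = D·F⁻¹ = F⁻¹·D'
    (Dφ : Matrix (Fin n) (Fin n) F) (hDφ : Dφ = D * Fm⁻¹)
    -- the reductions R = D·V and R^φ = D^φ·V^φ
    (V Vφ R Rφ : Matrix (Fin n) (Fin n) F)
    (hR : R = D * V) (hRφ : Rφ = Dφ * Vφ)
    (hVut : UpperTri V) (hVunit : IsUnit V.det)
    (hVφut : UpperTri Vφ) (hVφunit : IsUnit Vφ.det)
    (hRred : IsReducedMat R) (hRφred : IsReducedMat Rφ) :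
    IsCompatBasis (fun t => ((A t) ⊓ LinearMap.ker D.mulVecLin).map Fm.mulVecLin)
      ({v | ∃ j, v = matCol (Fm * Rφ) j ∧ v ≠ 0} ∪
        {v | ∃ j, v = Fm.mulVec (matCol V j) ∧ matCol R j = 0 ∧ j ∉ pivsSet Rφ}) ∧
    ∀ z ∈ ({v | ∃ j, v = matCol (Fm * Rφ) j ∧ v ≠ 0} ∪
        {v | ∃ j, v = Fm.mulVec (matCol V j) ∧ matCol R j = 0 ∧ j ∉ pivsSet Rφ} :
        Set (Fin n → F)),
      fsupp (fun t => ((A t) ⊓ LinearMap.ker D.mulVecLin).map Fm.mulVecLin) z =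
        fsupp A (Fm⁻¹.mulVec z) := by
  classical
  have hdiagV : ∀ i, V i i ≠ 0 := upperTri_diag_ne_zero hVut hVunit
  -- untransported candidate sets
  set S1 : Set (Fin n → F) := {v | ∃ j, v = matCol Rφ j ∧ v ≠ 0} with hS1def
  set S2 : Set (Fin n → F) :=
    {v | ∃ j, v = matCol V j ∧ matCol R j = 0 ∧ j ∉ pivsSet Rφ} with hS2def
  have hDRφ : D * Rφ = 0 := by
    rw [hRφ, hDφ, ← Matrix.mul_assoc, ← Matrix.mul_assoc, hD2, Matrix.zero_mul,
      Matrix.zero_mul]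
  -- elements of S1 ∪ S2 are cycles
  have hkerS : ∀ b ∈ S1 ∪ S2, D.mulVec b = 0 := by
    rintro b (⟨j, rfl, _⟩ | ⟨j, rfl, hj, _⟩)
    · rw [← matCol_mul, hDRφ]; rfl
    · rw [← matCol_mul, ← hR]; exact hj
  have hS0 : (0 : Fin n → F) ∉ S1 ∪ S2 := by
    rintro (⟨j, hj, hne⟩ | ⟨j, hj, _, _⟩)
    · exact hne rfl
    · exact hdiagV j (congrFun hj j).symm
  -- pivots are injective on S1 ∪ S2
  have hpivinj : ∀ v ∈ S1 ∪ S2, ∀ w ∈ S1 ∪ S2, pivFin v = pivFin w → v = w := by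
    rintro v (⟨j, rfl, hj⟩ | ⟨j, rfl, hj1, hj2⟩) w
      (⟨k, rfl, hk⟩ | ⟨k, rfl, hk1, hk2⟩) hvw
    · rw [hRφred j k hj hk hvw]
    · exfalso
      rw [pivFin_matCol_upperTri hVut hdiagV k] at hvw
      exact hk2 ⟨j, hj, hvw⟩
    · exfalso
      rw [pivFin_matCol_upperTri hVut hdiagV j] at hvw
      exact hj2 ⟨k, hk, hvw.symm⟩
    · rw [pivFin_matCol_upperTri hVut hdiagV j,
        pivFin_matCol_upperTri hVut hdiagV k] at hvw
      rw [WithBot.coe_eq_coe.mp hvw]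
  -- every index with zero column of R is realized as the pivot of some element of S1 ∪ S2
  have hpivreal : ∀ i : Fin n, matCol R i = 0 → ∃ b ∈ S1 ∪ S2, pivFin b = (i : WithBot (Fin n)) := by
    intro i hi
    by_cases hmem : i ∈ pivsSet Rφ
    · obtain ⟨j, hj0, hjp⟩ := hmem
      exact ⟨matCol Rφ j, Or.inl ⟨j, rfl, hj0⟩, hjp⟩
    · exact ⟨matCol V i, Or.inr ⟨i, rfl, hi, hmem⟩, pivFin_matCol_upperTri hVut hdiagV i⟩
  -- every nonzero cycle has a pivot at an index whose column of R vanishes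
  have hcycpiv : ∀ z : Fin n → F, D.mulVec z = 0 → z ≠ 0 →
      ∃ p : Fin n, pivFin z = ↑p ∧ matCol R p = 0 := by
    intro z hz hz0
    have hVV : V * V⁻¹ = 1 := Matrix.mul_nonsing_inv _ hVunit
    set a := V⁻¹.mulVec z with ha
    have hVa : V.mulVec a = z := by
      rw [ha, Matrix.mulVec_mulVec, hVV, Matrix.one_mulVec]
    have hRa : R.mulVec a = 0 := by
      rw [hR, ← Matrix.mulVec_mulVec, hVa, hz]
    have ha0 : a ≠ 0 := fun h => hz0 (by rw [← hVa, h, Matrix.mulVec_zero])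
    obtain ⟨p, hp, hap, _⟩ := pivFin_exists ha0
    refine ⟨p, ?_, ?_⟩
    · rw [← hVa, pivFin_mulVec_upperTri hVut hdiagV, hp]
    · by_contra hc
      exact hap (reduced_kill hRred hRa p hc)
  -- spanning: the intersection with each filtration step spans the cycle subspace
  have hspanZ : ∀ t, Submodule.span F
      ((S1 ∪ S2) ∩ ↑(A t ⊓ LinearMap.ker D.mulVecLin)) = A t ⊓ LinearMap.ker D.mulVecLin := by
    intro t
    apply le_antisymm
    · exact Submodule.span_le.mpr fun b hb => hb.2
    · have main : ∀ m : ℕ, ∀ z : Fin n → F,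
          z ∈ A t ⊓ LinearMap.ker D.mulVecLin → (∀ i : Fin n, z i ≠ 0 → (i : ℕ) < m) →
          z ∈ Submodule.span F ((S1 ∪ S2) ∩ ↑(A t ⊓ LinearMap.ker D.mulVecLin)) := by
        intro m
        induction m with
        | zero =>
          intro z _ hbound
          have hz : z = 0 := by
            funext i
            by_contra h
            exact absurd (hbound i h) (Nat.not_lt_zero _)
          rw [hz]; exact Submodule.zero_mem _
        | succ m ih =>
          intro z hz hbound
          by_cases hz0 : z = 0
          · rw [hz0]; exact Submodule.zero_mem _
          have hzk : D.mulVec z = 0 := by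
            have h2 := (Submodule.mem_inf.mp hz).2
            rwa [LinearMap.mem_ker, Matrix.mulVecLin_apply] at h2
          obtain ⟨p, hp, hRp⟩ := hcycpiv z hzk hz0
          obtain ⟨hzp, hzhi⟩ := pivFin_eq_coe_iff.mp hp
          obtain ⟨b, hbS, hbp⟩ := hpivreal p hRp
          obtain ⟨hbpne, hbhi⟩ := pivFin_eq_coe_iff.mp hbp
          have hbA : b ∈ A t := by
            rw [mem_filt_iff_piv A hcompat hord t hbp]
            exact (mem_filt_iff_piv A hcompat hord t hp).mp hz.1
          have hbk : D.mulVec b = 0 := hkerS b hbS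
          have hbZ : b ∈ A t ⊓ LinearMap.ker D.mulVecLin :=
            Submodule.mem_inf.mpr ⟨hbA, LinearMap.mem_ker.mpr
              (by rw [Matrix.mulVecLin_apply]; exact hbk)⟩
          have hbmem : b ∈ Submodule.span F
              ((S1 ∪ S2) ∩ ↑(A t ⊓ LinearMap.ker D.mulVecLin)) :=
            Submodule.subset_span ⟨hbS, hbZ⟩
          set c : F := z p * (b p)⁻¹ with hc
          have hz' : z - c • b ∈ Submodule.span F
              ((S1 ∪ S2) ∩ ↑(A t ⊓ LinearMap.ker D.mulVecLin)) := by
            apply ih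
            · exact Submodule.sub_mem _ hz (Submodule.smul_mem _ _ hbZ)
            · intro i hi
              have hip : (i : Fin n) < p := by
                rcases lt_trichotomy i p with h | h | h
                · exact h
                · exfalso
                  apply hi
                  subst h
                  show z i - c * b i = 0
                  rw [hc, mul_assoc, inv_mul_cancel₀ hbpne, mul_one, sub_self]
                · exfalso
                  apply hi
                  show z i - c * b i = 0
                  rw [hzhi i h, hbhi i h, mul_zero, sub_zero]
              have hpm : (p : ℕ) < m + 1 := hbound p hzp
              have : (i : ℕ) < (p : ℕ) := hip
              omega
          have : (z - c • b) + c • b ∈ Submodule.span F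
              ((S1 ∪ S2) ∩ ↑(A t ⊓ LinearMap.ker D.mulVecLin)) :=
            Submodule.add_mem _ hz' (Submodule.smul_mem _ _ hbmem)
          simpa using this
      intro z hz
      exact main n z hz fun i _ => i.isLt
  -- untransported compatible basis
  have hfinal : ∀ b ∈ S1 ∪ S2, b ∈ A (Fin.last N) ⊓ LinearMap.ker D.mulVecLin := by
    intro b hb
    refine Submodule.mem_inf.mpr ⟨by rw [htop]; trivial, LinearMap.mem_ker.mpr ?_⟩
    rw [Matrix.mulVecLin_apply]
    exact hkerS b hb
  -- identification of the stated set with the image of S1 ∪ S2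
  have hBeq : ({v | ∃ j, v = matCol (Fm * Rφ) j ∧ v ≠ 0} ∪
      {v | ∃ j, v = Fm.mulVec (matCol V j) ∧ matCol R j = 0 ∧ j ∉ pivsSet Rφ} :
      Set (Fin n → F)) = Fm.mulVec '' (S1 ∪ S2) := by
    rw [Set.image_union]
    congr 1
    · ext v
      constructor
      · rintro ⟨j, rfl, hne⟩
        refine ⟨matCol Rφ j, ⟨j, rfl, ?_⟩, (matCol_mul Fm Rφ j).symm⟩
        exact (mulVec_ne_zero_iff hFm _).mp (by rwa [← matCol_mul])
      · rintro ⟨w, ⟨j, rfl, hw⟩, rfl⟩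
        exact ⟨j, matCol_mul Fm Rφ j, (mulVec_ne_zero_iff hFm _).mpr hw⟩
    · ext v
      constructor
      · rintro ⟨j, rfl, h1, h2⟩
        exact ⟨matCol V j, ⟨j, rfl, h1, h2⟩, rfl⟩
      · rintro ⟨w, ⟨j, rfl, h1, h2⟩, rfl⟩
        exact ⟨j, rfl, h1, h2⟩
  constructor
  · rw [hBeq]
    refine ⟨?_, ?_, ?_⟩
    · rintro z ⟨b, hb, rfl⟩
      exact ⟨b, hfinal b hb, by rw [Matrix.mulVecLin_apply]⟩
    · have h1 : LinearIndependent F ((↑) : (S1 ∪ S2 : Set (Fin n → F)) → (Fin n → F)) :=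
        linearIndependent_of_pivots _ hS0 hpivinj
      have h2 := h1.map' Fm.mulVecLin
        (LinearMap.ker_eq_bot.mpr (by
          intro x y hxy
          rw [Matrix.mulVecLin_apply, Matrix.mulVecLin_apply] at hxy
          exact mulVec_inj hFm hxy))
      exact LinearIndepOn.id_image (v := Fm.mulVec) h2
    · intro t
      rw [image_inter_map hFm, span_image_mulVec, hspanZ]
  · intro z hz
    rw [hBeq] at hz
    obtain ⟨b, hbS, rfl⟩ := hz
    ext t
    simp only [fsupp, Set.mem_setOf_eq]
    rw [mem_map_iff hFm, inv_mulVec_mulVec hFm, Submodule.mem_inf]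
    constructor
    · intro h; exact h.1
    · intro h
      exact ⟨h, LinearMap.mem_ker.mpr
        (by rw [Matrix.mulVecLin_apply]; exact hkerS b hbS)⟩
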